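/- Let (k_n) be a sequence of positive reals with k_n³ ≥ n for all n. Then the ratio 38.5·n^{5/2}·√(log₂ n) / (2√2·k_n³·n² + k_n^{3/2}·n^{5/2}) tends to 0 as n → ∞. That is, when the cube of the kernel size exceeds the image size, FFT-based convolution has asymptotically smaller data movement cost than spatial convolution. -/

import Mathlib

/-!
Once `n ≤ k³`, the spatial cost `2√2·k³·n² + k^{3/2}·n^{5/2}` is at least `2√2·n³`, so the ratio
is at most `38.5·n^{5/2}·√(log₂ n) / (2√2·n³) = (38.5 / 2√2)·√(log₂ n / n)`, which tends to 0
because `log₂ n = o(n)`.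
-/

open Filter Real Topology

noncomputable section

/-- `D_conv(n, k)`: data movement cost of spatially convolving an `n × n` image with a `k × k` kernel. -/
def convDMC (n k : ℝ) : ℝ :=
  2 * √2 * k ^ 3 * n ^ 2 + k ^ ((3 : ℝ) / 2) * n ^ ((5 : ℝ) / 2)

/-- `D_FFTconv(n)`: lower bound on the data movement cost of FFT-based convolution. -/
def fftConvDMC (n : ℝ) : ℝ :=
  38.5 * n ^ ((5 : ℝ) / 2) * √(logb 2 n)

end

lemma two_mul_sqrt_two_mul_pow_three_le_convDMC {n k : ℝ} (hn : 0 ≤ n) (hk : 0 ≤ k)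
    (hnk : n ≤ k ^ 3) : 2 * √2 * n ^ 3 ≤ convDMC n k := by
  have h_spatial : 2 * √2 * n ^ 3 ≤ 2 * √2 * k ^ 3 * n ^ 2 := by
    rw [pow_succ' n 2, ← mul_assoc]
    gcongr
  have h_rest : 0 ≤ k ^ ((3 : ℝ) / 2) * n ^ ((5 : ℝ) / 2) := by positivity
  unfold convDMC
  linarith

lemma fftConvDMC_div_pow_three {n : ℝ} (hn : 0 < n) :
    fftConvDMC n / n ^ 3 = 38.5 * √(logb 2 n / n) := by
  have h_pow : n ^ ((5 : ℝ) / 2) = n ^ 2 * √n := by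
    rw [sqrt_eq_rpow, ← rpow_two, ← rpow_add hn]
    norm_num
  have h_sqrt : 0 < √n := sqrt_pos.mpr hn
  rw [fftConvDMC, h_pow, sqrt_div' _ hn.le]
  field_simp
  rw [sq_sqrt hn.le]

lemma tendsto_fftConvDMC_div_pow_three :
    Tendsto (fun n : ℝ => fftConvDMC n / n ^ 3) atTop (𝓝 0) := by
  have h_logb : Tendsto (fun n : ℝ => logb 2 n / n) atTop (𝓝 0) :=
    isLittleO_logb_id_atTop.tendsto_div_nhds_zero
  have h_lim : Tendsto (fun n : ℝ => 38.5 * √(logb 2 n / n)) atTop (𝓝 0) := by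
    simpa using ((continuous_sqrt.tendsto 0).comp h_logb).const_mul 38.5
  refine h_lim.congr' ?_
  filter_upwards [eventually_gt_atTop 0] with n hn
  exact (fftConvDMC_div_pow_three hn).symm

lemma fftConvDMC_div_convDMC_le {n k : ℝ} (hn : 0 < n) (hk : 0 ≤ k) (hnk : n ≤ k ^ 3) :
    fftConvDMC n / convDMC n k ≤ fftConvDMC n / n ^ 3 / (2 * √2) := by
  rw [div_div, mul_comm]
  exact div_le_div_of_nonneg_left (by unfold fftConvDMC; positivity) (by positivity)
    (two_mul_sqrt_two_mul_pow_three_le_convDMC hn.le hk hnk)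

theorem dmc_fft_beats_conv_general (k : ℕ → ℝ)
    (hk3 : ∀ n : ℕ, (n : ℝ) ≤ (k n) ^ 3) :
    Tendsto (fun n : ℕ =>
      38.5 * (n : ℝ) ^ ((5 : ℝ) / 2) * Real.sqrt (Real.logb 2 (n : ℝ))
        / (2 * Real.sqrt 2 * (k n) ^ 3 * (n : ℝ) ^ 2
            + (k n) ^ ((3 : ℝ) / 2) * (n : ℝ) ^ ((5 : ℝ) / 2)))
      atTop (nhds 0) := by
  change Tendsto (fun n : ℕ => fftConvDMC n / convDMC n (k n)) atTop (𝓝 0)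
  have hk : ∀ n, 0 ≤ k n := fun n =>
    (Odd.pow_nonneg_iff (by decide)).mp ((Nat.cast_nonneg n).trans (hk3 n))
  have h_bound : Tendsto (fun n : ℕ => fftConvDMC n / (n : ℝ) ^ 3 / (2 * √2)) atTop (𝓝 0) := by
    simpa using (tendsto_fftConvDMC_div_pow_three.comp tendsto_natCast_atTop_atTop).div_const _
  refine squeeze_zero' ?_ ?_ h_bound
  · refine Eventually.of_forall fun n => ?_
    have := hk n
    unfold fftConvDMC convDMC
    positivity
  · filter_upwards [eventually_gt_atTop 0] with n hn
    exact fftConvDMC_div_convDMC_le (Nat.cast_pos.mpr hn) (hk n) (hk3 n)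

/-- If the kernel sizes `k n` satisfy `k n ³ ≥ n`, FFT-based convolution has
asymptotically smaller data movement cost than spatial convolution: the ratio
`38.5·n^{5/2}·√(log₂ n) / (2√2·k³·n² + k^{3/2}·n^{5/2})` tends to 0. -/
theorem dmc_fft_beats_conv (k : ℕ → ℝ) (hk : ∀ n, 0 < k n)
    (hk3 : ∀ n : ℕ, (n : ℝ) ≤ (k n) ^ 3) :
    Tendsto (fun n : ℕ =>
      38.5 * (n : ℝ) ^ ((5 : ℝ) / 2) * Real.sqrt (Real.logb 2 (n : ℝ))
        / (2 * Real.sqrt 2 * (k n) ^ 3 * (n : ℝ) ^ 2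
            + (k n) ^ ((3 : ℝ) / 2) * (n : ℝ) ^ ((5 : ℝ) / 2)))
      atTop (nhds 0) :=
  dmc_fft_beats_conv_general k hk3
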